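/- arXiv:2208.14391 — 3 statements merged into one kernel-verified Lean document; each statement's English description precedes it below -/
import Mathlib

section
/- Let f(x) = x·log(x). If μ_i ∈ 𝒫^{n_i}(X_i) for i = 2,…,N (no assumption on μ₁), then every coupling π ∈ Π(μ₁,…,μ_N) satisfies D_f(π, P) ≤ Σ_{i=2}^N log(n_i), where P = μ₁⊗⋯⊗μ_N. -/
open MeasureTheory ENNReal Filter

noncomputable section

/-- The set of couplings of two marginals. -/
def couplings2 {Y Z : Type*} [MeasurableSpace Y] [MeasurableSpace Z]
    (μ : Measure Y) (ν : Measure Z) : Set (Measure (Y × Z)) :=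
  {κ | IsProbabilityMeasure κ ∧ κ.map Prod.fst = μ ∧ κ.map Prod.snd = ν}

/-- The set of couplings of `N` marginals. -/
def couplings {N : ℕ} {X : Fin N → Type*} [∀ i, MeasurableSpace (X i)]
    (μ : ∀ i, Measure (X i)) : Set (Measure (∀ i, X i)) :=
  {π | IsProbabilityMeasure π ∧ ∀ i, π.map (fun x => x i) = μ i}

/-- `p`-Wasserstein distance with respect to an abstract distance function `D`. -/
def Wass {Z : Type*} [MeasurableSpace Z] (D : Z → Z → ℝ) (p : ℝ)
    (μ ν : Measure Z) : ℝ≥0∞ :=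
  ⨅ κ ∈ couplings2 μ ν, (∫⁻ z, ENNReal.ofReal (D z.1 z.2 ^ p) ∂κ) ^ (1 / p)

/-- The product metric `d_{X,p}`. -/
def dXp {N : ℕ} {X : Fin N → Type*} [∀ i, PseudoMetricSpace (X i)] (p : ℝ)
    (x y : ∀ i, X i) : ℝ :=
  (∑ i, dist (x i) (y i) ^ p) ^ (1 / p)

/-- Finite `p`-th moment. -/
def HasMomentp {Y : Type*} [MeasurableSpace Y] [PseudoMetricSpace Y]
    (p : ℝ) (μ : Measure Y) : Prop :=
  ∃ x₀ : Y, ∫⁻ x, ENNReal.ofReal (dist x x₀ ^ p) ∂μ < ⊤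

/-- f-divergence `D_f(μ, ν)`, valued in the extended reals. -/
def fDiv {Z : Type*} [MeasurableSpace Z] (f : ℝ → ℝ) (μ ν : Measure Z) : EReal :=
  haveI := Classical.propDecidable
  if μ ≪ ν ∧ Integrable (fun z => f (μ.rnDeriv ν z).toReal) ν
  then ((∫ z, f (μ.rnDeriv ν z).toReal ∂ν : ℝ) : EReal)
  else ⊤

/-- `μ` is supported on at most `n` points. -/
def FinitelySupported {Y : Type*} [MeasurableSpace Y] (n : ℕ) (μ : Measure Y) : Prop :=
  ∃ s : Finset Y, μ (↑s : Set Y)ᶜ = 0 ∧ s.card ≤ n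

/-- `μ` is a uniform measure on `n` points. -/
def UniformOn {Y : Type*} [MeasurableSpace Y] (n : ℕ) (μ : Measure Y) : Prop :=
  ∃ y : Fin n → Y, μ = (n : ℝ≥0∞)⁻¹ • ∑ j, Measure.dirac (y j)

/-- The quantization property `quant_p(C, α)` with respect to a distance `D`. -/
def QuantD {Z : Type*} [MeasurableSpace Z] (D : Z → Z → ℝ) (p C α : ℝ)
    (μ : Measure Z) : Prop :=
  ∀ n : ℕ, 1 ≤ n → ∃ μn : Measure Z, IsProbabilityMeasure μn ∧ FinitelySupported n μn ∧
    Wass D p μn μ ≤ ENNReal.ofReal (C * (n : ℝ) ^ (-α))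

/-- The empirical quantization property `quant_p^{em}(C, α)`. -/
def QuantEm {Y : Type*} [MeasurableSpace Y] [PseudoMetricSpace Y] (p C α : ℝ)
    (μ : Measure Y) : Prop :=
  ∀ n : ℕ, 1 ≤ n → ∃ μn : Measure Y, UniformOn n μn ∧
    Wass dist p μn μ ≤ ENNReal.ofReal (C * (n : ℝ) ^ (-α))

/-- The unregularized optimal transport value (N marginals). -/
def OTcost {N : ℕ} {X : Fin N → Type*} [∀ i, MeasurableSpace (X i)]
    (μ : ∀ i, Measure (X i)) (c : (∀ i, X i) → ℝ) : ℝ :=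
  sInf ((fun π : Measure (∀ i, X i) => ∫ x, c x ∂π) '' couplings μ)

/-- The `D_f`-regularized optimal transport value (N marginals). -/
def OTf {N : ℕ} {X : Fin N → Type*} [∀ i, MeasurableSpace (X i)]
    (μ : ∀ i, Measure (X i)) (c : (∀ i, X i) → ℝ) (f : ℝ → ℝ) (ε : ℝ) : EReal :=
  sInf ((fun π : Measure (∀ i, X i) =>
    ((∫ x, c x ∂π : ℝ) : EReal) + (ε : EReal) * fDiv f π (Measure.pi μ)) '' couplings μ)

/-- The unregularized optimal transport value (two marginals). -/
def OTcost2 {Y Z : Type*} [MeasurableSpace Y] [MeasurableSpace Z]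
    (μ : Measure Y) (ν : Measure Z) (c : Y × Z → ℝ) : ℝ :=
  sInf ((fun π : Measure (Y × Z) => ∫ z, c z ∂π) '' couplings2 μ ν)

/-- The `D_f`-regularized optimal transport value (two marginals). -/
def OTf2 {Y Z : Type*} [MeasurableSpace Y] [MeasurableSpace Z]
    (μ : Measure Y) (ν : Measure Z) (c : Y × Z → ℝ) (f : ℝ → ℝ) (ε : ℝ) : EReal :=
  sInf ((fun π : Measure (Y × Z) =>
    ((∫ z, c z ∂π : ℝ) : EReal) + (ε : EReal) * fDiv f π (μ.prod ν)) '' couplings2 μ ν)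

/-- Condition `(A_{L,C})`: the integrated transport cost is Lipschitz in the coupling. -/
def CondA {N : ℕ} {X : Fin N → Type*} [∀ i, MeasurableSpace (X i)]
    [∀ i, PseudoMetricSpace (X i)]
    (p L C : ℝ) (μ : ∀ i, Measure (X i)) (c : (∀ i, X i) → ℝ) : Prop :=
  ∀ μ' : ∀ i, Measure (X i),
    (∀ i, IsProbabilityMeasure (μ' i) ∧ HasMomentp p (μ' i) ∧
      Wass dist p (μ' i) (μ i) ≤ ENNReal.ofReal C) →
    ∀ π ∈ couplings μ, ∀ π' ∈ couplings μ',
      ENNReal.ofReal |∫ x, c x ∂π - ∫ x, c x ∂π'| ≤ ENNReal.ofReal L * Wass (dXp p) p π π'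

/-!
On the fibre `{x | x i = p i for all i ≠ 0}` a coupling `π` is dominated by its first
marginal, while `P = ⊗ μ i` restricts there to `μ 0` times `∏_{i ≠ 0} μ i {p i}`. As the
marginals `μ i`, `i ≠ 0`, are finitely supported, finitely many fibres carry `π`, so
`dπ/dP ≤ ∏_{i ≠ 0} (μ i {x i})⁻¹`. Hence `∫ ρ log ρ dP ≤ ∫ ∑_{i ≠ 0} -log μ i {x i} dπ`,
and the `i`-th term is the Shannon entropy of `μ i`, at most `log n i`.
-/

open Finset Function

namespace Real

theorem sum_negMulLog_le_log_card {α : Type*} (s : Finset α) {p : α → ℝ}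
    (hp : ∀ a ∈ s, 0 ≤ p a) (hsum : ∑ a ∈ s, p a = 1) :
    ∑ a ∈ s, negMulLog (p a) ≤ log #s := by
  have hs : (0 : ℝ) < #s := by
    rw [Nat.cast_pos, Finset.card_pos]
    exact Finset.nonempty_of_sum_ne_zero (by rw [hsum]; exact one_ne_zero)
  have h := concaveOn_negMulLog.le_map_sum (t := s) (w := fun _ => (#s : ℝ)⁻¹) (p := p)
    (fun _ _ => inv_nonneg.2 hs.le) (by simp [hs.ne']) hp
  have hinv : negMulLog (#s : ℝ)⁻¹ = (#s : ℝ)⁻¹ * log #s := by simp [negMulLog, log_inv]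
  simp only [smul_eq_mul, ← mul_sum, hsum, mul_one, hinv] at h
  exact le_of_mul_le_mul_left h (inv_pos.2 hs)

end Real

theorem ENNReal.toReal_inv_prod_eq_exp_sum_neg_log {ι : Type*} (s : Finset ι) {m : ι → ℝ≥0∞}
    (hm : ∀ i ∈ s, m i ≠ 0) (hm_top : ∀ i ∈ s, m i ≠ ⊤) :
    ((∏ i ∈ s, m i)⁻¹).toReal = Real.exp (∑ i ∈ s, -Real.log (m i).toReal) := by
  rw [ENNReal.toReal_inv, ENNReal.toReal_prod, Real.exp_sum, ← Finset.prod_inv_distrib]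
  refine prod_congr rfl fun i hi => ?_
  rw [Real.exp_neg, Real.exp_log (ENNReal.toReal_pos (hm i hi) (hm_top i hi))]

namespace MeasureTheory

section FiniteSupport

variable {Y : Type*} [MeasurableSpace Y] {μ : Measure Y} {s : Finset Y}

theorem ae_measure_singleton_ne_zero_of_measure_compl_finset_eq_zero (hs : μ (↑s)ᶜ = 0) :
    ∀ᵐ a ∂μ, μ {a} ≠ 0 := by
  have hmem : ∀ᵐ a ∂μ, a ∈ s := mem_ae_iff.2 hs
  have hatoms : ∀ᵐ a ∂μ, ∀ b ∈ s, μ {b} = 0 → a ≠ b := by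
    refine (Filter.eventually_all_finset s).2 fun b _ => ?_
    by_cases hb : μ {b} = 0
    · exact (measure_eq_zero_iff_ae_notMem.1 hb).mono fun _ h _ => h
    · exact Eventually.of_forall fun _ h => absurd h hb
  filter_upwards [hmem, hatoms] with a ha h0 hμa using h0 a ha hμa rfl

variable [MeasurableSingletonClass Y]

theorem integrable_of_measure_compl_finset_eq_zero [IsFiniteMeasure μ] (hs : μ (↑s)ᶜ = 0)
    (f : Y → ℝ) : Integrable f μ := by
  rw [← Measure.restrict_eq_self_of_ae_mem (mem_ae_iff.2 hs)]
  exact IntegrableOn.finset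

theorem integral_eq_sum_of_measure_compl_finset_eq_zero [IsFiniteMeasure μ]
    (hs : μ (↑s)ᶜ = 0) (f : Y → ℝ) : ∫ a, f a ∂μ = ∑ a ∈ s, μ.real {a} * f a := by
  simp_rw [← smul_eq_mul]
  rw [← setIntegral_finset s IntegrableOn.finset, Measure.restrict_eq_self_of_ae_mem]
  exact mem_ae_iff.2 hs

theorem FinitelySupported.integral_neg_log_measureReal_singleton_le [IsProbabilityMeasure μ]
    {n : ℕ} (h : FinitelySupported n μ) : ∫ a, -Real.log (μ.real {a}) ∂μ ≤ Real.log n := by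
  obtain ⟨s, hs, hcard⟩ := h
  have hsum : ∑ a ∈ s, μ.real {a} = 1 := by
    rw [sum_measureReal_singleton, measureReal_def,
      (prob_compl_eq_zero_iff s.measurableSet).1 hs, ENNReal.toReal_one]
  have hs_pos : 0 < #s := Finset.card_pos.2
    (Finset.nonempty_of_sum_ne_zero (f := fun a => μ.real {a}) (by rw [hsum]; exact one_ne_zero))
  calc ∫ a, -Real.log (μ.real {a}) ∂μ = ∑ a ∈ s, Real.negMulLog (μ.real {a}) := by
        rw [integral_eq_sum_of_measure_compl_finset_eq_zero hs]
        simp only [Real.negMulLog, neg_mul, mul_neg]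
    _ ≤ Real.log #s := Real.sum_negMulLog_le_log_card s (fun _ _ => measureReal_nonneg) hsum
    _ ≤ Real.log n := Real.log_le_log (by exact_mod_cast hs_pos) (by exact_mod_cast hcard)

end FiniteSupport

end MeasureTheory

section EntropicDivergence

variable {Ω : Type*} [MeasurableSpace Ω] {π P : Measure Ω}

theorem fDiv_mul_log_le_integral_of_rnDeriv_le_exp [IsFiniteMeasure π] [IsFiniteMeasure P]
    (hac : π ≪ P) {h : Ω → ℝ} (hh : Integrable h π)
    (hρ : ∀ᵐ x ∂P, (π.rnDeriv P x).toReal ≤ Real.exp (h x)) :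
    fDiv (fun x => x * Real.log x) π P ≤ ((∫ x, h x ∂π : ℝ) : EReal) := by
  set ρ : Ω → ℝ := fun x => (π.rnDeriv P x).toReal
  have hρ_nonneg : ∀ x, 0 ≤ ρ x := fun _ => ENNReal.toReal_nonneg
  have hpt : ∀ᵐ x ∂P, ρ x * Real.log (ρ x) ≤ ρ x * h x := by
    filter_upwards [hρ] with x hx
    rcases (hρ_nonneg x).eq_or_lt with h0 | hpos
    · simp [← h0]
    · exact mul_le_mul_of_nonneg_left ((Real.log_le_iff_le_exp hpos).2 hx) hpos.le
  have hρh : Integrable (fun x => ρ x * h x) P := (integrable_toReal_rnDeriv_mul_iff hac).2 hh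
  -- `ρ - 1 ≤ ρ log ρ ≤ ρ h` gives the integrable envelope `1 + ρ |h|`
  have hint : Integrable (fun x => ρ x * Real.log (ρ x)) P := by
    refine Integrable.mono' ((integrable_const 1).add
      ((integrable_toReal_rnDeriv_mul_iff hac).2 hh.abs))
      ((Measure.measurable_rnDeriv π P).ennreal_toReal.mul
        (Measure.measurable_rnDeriv π P).ennreal_toReal.log).aestronglyMeasurable ?_
    filter_upwards [hpt] with x hx
    have hlow := Real.self_sub_one_le_mul_log (hρ_nonneg x)
    have hup : ρ x * h x ≤ ρ x * |h x| := mul_le_mul_of_nonneg_left (le_abs_self _) (hρ_nonneg x)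
    rw [Real.norm_eq_abs, abs_le]
    constructor <;> simp only [Pi.add_apply] <;>
      nlinarith [hρ_nonneg x, mul_nonneg (hρ_nonneg x) (abs_nonneg (h x))]
  rw [fDiv, if_pos ⟨hac, hint⟩, EReal.coe_le_coe_iff, ← integral_toReal_rnDeriv_mul hac]
  exact integral_mono_ae hint hρh hpt

end EntropicDivergence

namespace MeasureTheory.Measure

variable {Ω : Type*} [MeasurableSpace Ω] {π P : Measure Ω} {w : Ω → ℝ≥0∞}

theorem absolutelyContinuous_of_forall_le_setLIntegral
    (h : ∀ A, MeasurableSet A → π A ≤ ∫⁻ x in A, w x ∂P) : π ≪ P :=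
  .mk fun A hA hA0 => le_antisymm ((h A hA).trans_eq (by simp [restrict_eq_zero.2 hA0]))
    bot_le

theorem rnDeriv_le_of_forall_le_setLIntegral [SigmaFinite π] [SigmaFinite P]
    (h : ∀ A, MeasurableSet A → π A ≤ ∫⁻ x in A, w x ∂P) : π.rnDeriv P ≤ᵐ[P] w :=
  ae_le_of_forall_setLIntegral_le_of_sigmaFinite (measurable_rnDeriv π P) fun A hA _ => by
    rw [setLIntegral_rnDeriv (absolutelyContinuous_of_forall_le_setLIntegral h)]
    exact h A hA

end MeasureTheory.Measure

theorem update_eval_eq_of_mem_pi_compl {ι : Type*} [DecidableEq ι] {X : ι → Type*} {i₀ : ι}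
    {p x : ∀ i, X i} (hx : x ∈ Set.pi {i₀}ᶜ fun i => {p i}) : update p i₀ (x i₀) = x := by
  rw [eq_comm, eq_update_iff]
  exact ⟨rfl, fun i hi => hx i hi⟩

theorem inter_pi_compl_singleton_eq {ι : Type*} [DecidableEq ι] {X : ι → Type*} (i₀ : ι)
    (p : ∀ i, X i) (A : Set (∀ i, X i)) :
    A ∩ (Set.pi {i₀}ᶜ fun i => {p i}) =
      Set.pi Set.univ (update (fun i => ({p i} : Set (X i))) i₀ (update p i₀ ⁻¹' A)) := by
  ext x
  simp only [Set.mem_univ_pi, forall_update_iff _ fun i (C : Set (X i)) => x i ∈ C]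
  constructor
  · rintro ⟨hA, hx⟩
    exact ⟨by rwa [Set.mem_preimage, update_eval_eq_of_mem_pi_compl hx], hx⟩
  · rintro ⟨hA, hx⟩
    exact ⟨by rwa [Set.mem_preimage, update_eval_eq_of_mem_pi_compl hx] at hA, hx⟩

section Coupling

variable {ι : Type*} {X : ι → Type*} [∀ i, MeasurableSpace (X i)]
  {μ : ∀ i, Measure (X i)} {π : Measure (∀ i, X i)}

theorem measure_le_of_subset_preimage_eval (hπ : ∀ i, π.map (fun x => x i) = μ i) {i : ι}
    {S : Set (∀ i, X i)} {B : Set (X i)} (hS : S ⊆ (fun x => x i) ⁻¹' B) : π S ≤ μ i B :=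
  (measure_mono hS).trans <| (Measure.le_map_apply (measurable_pi_apply i).aemeasurable B).trans_eq
    (by rw [hπ i])

theorem ae_of_map_eval_eq [Countable ι] (hπ : ∀ i, π.map (fun x => x i) = μ i) {q : ι → Prop}
    {p : ∀ i, X i → Prop} (h : ∀ i, q i → ∀ᵐ a ∂μ i, p i a) : ∀ᵐ x ∂π, ∀ i, q i → p i (x i) := by
  refine ae_all_iff.2 fun i => ?_
  by_cases hi : q i
  · have hμ := h i hi
    rw [← hπ i] at hμ
    exact (ae_of_ae_map (measurable_pi_apply i).aemeasurable hμ).mono fun _ hx _ => hx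
  · exact Eventually.of_forall fun _ h => absurd h hi

theorem integrable_comp_eval (hπ : ∀ i, π.map (fun x => x i) = μ i) {i : ι} {g : X i → ℝ}
    (hg : Integrable g (μ i)) : Integrable (fun x => g (x i)) π := by
  rw [← hπ i] at hg
  exact hg.comp_measurable (measurable_pi_apply i)

theorem integral_comp_eval (hπ : ∀ i, π.map (fun x => x i) = μ i) {i : ι} {g : X i → ℝ}
    (hg : AEStronglyMeasurable g (μ i)) : ∫ x, g (x i) ∂π = ∫ a, g a ∂μ i := by
  rw [← hπ i] at hg ⊢
  exact (integral_map (measurable_pi_apply i).aemeasurable hg).symm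

variable [Fintype ι] [DecidableEq ι] (i₀ : ι)

theorem measure_pi_inter_pi_compl_singleton [∀ i, SigmaFinite (μ i)] (p : ∀ i, X i)
    (A : Set (∀ i, X i)) :
    Measure.pi μ (A ∩ Set.pi {i₀}ᶜ fun i => {p i}) =
      μ i₀ (update p i₀ ⁻¹' A) * ∏ i ∈ univ.erase i₀, μ i {p i} := by
  rw [inter_pi_compl_singleton_eq, Measure.pi_pi, ← mul_prod_erase _ _ (mem_univ i₀)]
  congr 1
  · simp
  · exact prod_congr rfl fun i hi => by rw [update_of_ne (ne_of_mem_erase hi)]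

variable [∀ i, MeasurableSingletonClass (X i)] [∀ i, IsFiniteMeasure (μ i)]

theorem measure_inter_pi_compl_singleton_le_setLIntegral
    (hπ : ∀ i, π.map (fun x => x i) = μ i) (p : ∀ i, X i) {A : Set (∀ i, X i)}
    (hA : MeasurableSet A) :
    π (A ∩ Set.pi {i₀}ᶜ fun i => {p i}) ≤
      ∫⁻ x in A ∩ Set.pi {i₀}ᶜ fun i => {p i},
        (∏ i ∈ univ.erase i₀, μ i {x i})⁻¹ ∂Measure.pi μ := by
  set F := Set.pi {i₀}ᶜ fun i => ({p i} : Set (X i))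
  have hF : MeasurableSet F := .pi (Set.to_countable _) fun i _ => measurableSet_singleton (p i)
  rw [setLIntegral_congr_fun (hA.inter hF) (g := fun _ => (∏ i ∈ univ.erase i₀, μ i {p i})⁻¹)
    fun x hx => by
      rw [prod_congr rfl fun i hi => by rw [hx.2 i (ne_of_mem_erase hi)]],
    setLIntegral_const, measure_pi_inter_pi_compl_singleton]
  by_cases h0 : ∏ i ∈ univ.erase i₀, μ i {p i} = 0
  · -- a null atom `p i` makes the whole fibre `π`-null through the `i`-th marginal
    obtain ⟨i, hi, hpi⟩ := prod_eq_zero_iff.1 h0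
    refine le_of_le_of_eq (measure_le_of_subset_preimage_eval hπ (B := {p i}) fun x hx =>
      hx.2 i (ne_of_mem_erase hi)) ?_
    rw [hpi, h0, mul_zero, mul_zero]
  · calc π (A ∩ F) ≤ μ i₀ (update p i₀ ⁻¹' A) := measure_le_of_subset_preimage_eval hπ
          fun x hx => by simpa [update_eval_eq_of_mem_pi_compl hx.2] using hx.1
      _ = _ := by
          rw [mul_left_comm, ENNReal.inv_mul_cancel h0
            (ENNReal.prod_ne_top fun i _ => measure_ne_top _ _), mul_one]

theorem measure_le_setLIntegral_inv_prod_measure_singleton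
    (hπ : ∀ i, π.map (fun x => x i) = μ i) (s : ∀ i, Finset (X i))
    (hs : ∀ i, i ≠ i₀ → μ i (↑(s i))ᶜ = 0) {A : Set (∀ i, X i)} (hA : MeasurableSet A) :
    π A ≤ ∫⁻ x in A, (∏ i ∈ univ.erase i₀, μ i {x i})⁻¹ ∂Measure.pi μ := by
  rcases isEmpty_or_nonempty (X i₀) with hX | ⟨⟨y₀⟩⟩
  · have : IsEmpty (∀ i, X i) := isEmpty_pi.2 ⟨i₀, hX⟩
    simp [Set.eq_empty_of_isEmpty A]
  set F : (∀ i, X i) → Set (∀ i, X i) := fun p => Set.pi {i₀}ᶜ fun i => {p i}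
  -- `K` holds one point, with `i₀`-coordinate `y₀`, of each fibre meeting the support of `π`
  set K := Fintype.piFinset (update s i₀ {y₀})
  have hcover : ∀ᵐ x ∂π, x ∈ ⋃ p ∈ K, F p := by
    filter_upwards [ae_of_map_eval_eq hπ fun i hi => mem_ae_iff.2 (hs i hi)] with x hx
    refine Set.mem_biUnion (x := update x i₀ y₀) (Fintype.mem_piFinset.2 fun i => ?_) ?_
    · rcases eq_or_ne i i₀ with rfl | hi
      · simp
      · simpa [update_of_ne hi] using hx i hi
    · exact fun i hi => (update_of_ne hi _ _).symm
  have hdisj : (K : Set (∀ i, X i)).PairwiseDisjoint F := by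
    intro p hp q hq hpq
    refine Set.disjoint_left.2 fun x hxp hxq => hpq ?_
    have hK : ∀ r ∈ K, x ∈ F r → r = update x i₀ y₀ := fun r hr hxr => by
      have hr0 : r i₀ = y₀ := by simpa using Fintype.mem_piFinset.1 hr i₀
      rw [← update_eval_eq_of_mem_pi_compl hxr, update_idem, ← hr0, update_eq_self]
    rw [hK p hp hxp, hK q hq hxq]
  have hFmeas : ∀ p, MeasurableSet (A ∩ F p) := fun p =>
    hA.inter (.pi (Set.to_countable _) fun i _ => measurableSet_singleton (p i))
  calc π A = π (⋃ p ∈ K, A ∩ F p) := by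
        rw [← Set.inter_iUnion₂, measure_inter_conull (ae_iff.1 hcover)]
    _ ≤ ∑ p ∈ K, π (A ∩ F p) := measure_biUnion_finset_le _ _
    _ ≤ ∑ p ∈ K, ∫⁻ x in A ∩ F p, (∏ i ∈ univ.erase i₀, μ i {x i})⁻¹ ∂Measure.pi μ :=
        sum_le_sum fun p _ => measure_inter_pi_compl_singleton_le_setLIntegral i₀ hπ p hA
    _ = ∫⁻ x in ⋃ p ∈ K, A ∩ F p, (∏ i ∈ univ.erase i₀, μ i {x i})⁻¹ ∂Measure.pi μ :=
        (lintegral_biUnion_finset (hdisj.mono fun _ => Set.inter_subset_right)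
          (fun p _ => hFmeas p) _).symm
    _ ≤ _ := lintegral_mono_set (Set.iUnion₂_subset fun _ _ => Set.inter_subset_left)

end Coupling

theorem divergence_bound_entropic_multimarginal_general
    {N : ℕ} [NeZero N] {X : Fin N → Type*}
    [∀ i, MetricSpace (X i)]
    [∀ i, MeasurableSpace (X i)] [∀ i, BorelSpace (X i)]
    (μ : ∀ i, Measure (X i)) [∀ i, IsProbabilityMeasure (μ i)]
    (n : Fin N → ℕ)
    (hsupp : ∀ i : Fin N, i ≠ 0 → FinitelySupported (n i) (μ i))
    (π : Measure (∀ i, X i)) (hπ : π ∈ couplings μ) :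
    fDiv (fun x => x * Real.log x) π (Measure.pi μ) ≤
      ((∑ i ∈ Finset.univ.erase (0 : Fin N), Real.log (n i) : ℝ) : EReal) := by
  obtain ⟨_, hmarg⟩ := hπ
  choose! s hs using fun i hi => (hsupp i hi).imp fun _ h => h.1
  have hdens := fun A (hA : MeasurableSet A) =>
    measure_le_setLIntegral_inv_prod_measure_singleton 0 hmarg s hs hA
  have hatoms : ∀ᵐ x ∂Measure.pi μ, ∀ i, i ≠ 0 → μ i {x i} ≠ 0 :=
    ae_of_map_eval_eq (fun i => (measurePreserving_eval μ i).map_eq) fun i hi =>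
      ae_measure_singleton_ne_zero_of_measure_compl_finset_eq_zero (hs i hi)
  have hint : ∀ i ∈ univ.erase 0, Integrable (fun a => -Real.log ((μ i).real {a})) (μ i) :=
    fun i hi => integrable_of_measure_compl_finset_eq_zero (hs i (ne_of_mem_erase hi)) _
  refine (fDiv_mul_log_le_integral_of_rnDeriv_le_exp
    (Measure.absolutelyContinuous_of_forall_le_setLIntegral hdens)
    (integrable_finsetSum _ fun i hi => integrable_comp_eval hmarg (hint i hi)) ?_).trans ?_
  · filter_upwards [Measure.rnDeriv_le_of_forall_le_setLIntegral hdens, hatoms] with x hρ hx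
    have hx' : ∀ i ∈ univ.erase 0, μ i {x i} ≠ 0 := fun i hi => hx i (ne_of_mem_erase hi)
    calc (π.rnDeriv (Measure.pi μ) x).toReal ≤ ((∏ i ∈ univ.erase 0, μ i {x i})⁻¹).toReal :=
          ENNReal.toReal_mono (ENNReal.inv_ne_top.2 (prod_ne_zero_iff.2 hx')) hρ
      _ = _ := ENNReal.toReal_inv_prod_eq_exp_sum_neg_log _ hx' fun _ _ => measure_ne_top _ _
  · rw [integral_finsetSum _ fun i hi => integrable_comp_eval hmarg (hint i hi),
      EReal.coe_le_coe_iff]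
    refine sum_le_sum fun i hi => ?_
    rw [integral_comp_eval hmarg (hint i hi).aestronglyMeasurable]
    exact (hsupp i (ne_of_mem_erase hi)).integral_neg_log_measureReal_singleton_le

/-- Lemma 2.4 (iii) (Divergence bounds, entropic case): for `f x = x log x`, if
`μ i` is supported on at most `n i` points for every `i ≠ 0` (no assumption on `μ 0`),
then every coupling `π` of `(μ i)` satisfies `D_f(π, P) ≤ ∑_{i ≠ 0} log (n i)`,
where `P` is the product of the marginals. -/
theorem divergence_bound_entropic_multimarginal
    {N : ℕ} [NeZero N] {X : Fin N → Type*}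
    [∀ i, MetricSpace (X i)] [∀ i, PolishSpace (X i)]
    [∀ i, MeasurableSpace (X i)] [∀ i, BorelSpace (X i)]
    (μ : ∀ i, Measure (X i)) [∀ i, IsProbabilityMeasure (μ i)]
    (n : Fin N → ℕ)
    (hsupp : ∀ i : Fin N, i ≠ 0 → FinitelySupported (n i) (μ i))
    (π : Measure (∀ i, X i)) (hπ : π ∈ couplings μ) :
    fDiv (fun x => x * Real.log x) π (Measure.pi μ) ≤
      ((∑ i ∈ Finset.univ.erase (0 : Fin N), Real.log (n i) : ℝ) : EReal) :=
  divergence_bound_entropic_multimarginal_general μ n hsupp π hπ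
end
end

section
/- Let ĥ₁ ∈ L¹(μ₁) and ĥ₂ ∈ L¹(μ₂) be Kantorovich potentials for OT, i.e. ĥ₁(x) + ĥ₂(y) ≤ c(x,y) for all (x,y) ∈ X₁×X₂ and ∫ ĥ₁ dμ₁ + ∫ ĥ₂ dμ₂ = OT, and set ĉ(x,y) = c(x,y) − ĥ₁(x) − ĥ₂(y) ≥ 0. Define f*(y) = sup_{x ≥ 0} (xy − f(x)) and f*_ε(y) = ε·f*(y/ε). Then OT_{f,ε} − OT ≥ sup_{a ∈ ℝ} ( a − ∫ f*_ε(a − ĉ(x,y)) dμ₁(x)dμ₂(y) ) ≥ sup_{a ∈ ℝ} ( a − f*_ε(a)·(μ₁⊗μ₂)({(x,y) : ĉ(x,y) ≤ a}) ) − ε·f*(0). -/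
open MeasureTheory ENNReal Filter

noncomputable section

/-- The convex conjugate `f*(y) = sup_{x ≥ 0} (x y − f x)`. -/
def fStar (f : ℝ → ℝ) (y : ℝ) : ℝ :=
  sSup ((fun x => x * y - f x) '' Set.Ici (0 : ℝ))


/-!
For a coupling `π` with density `ρ = dπ/dP`, the potentials give `∫ c dπ = OT + ∫ ĉ dπ`, since
`π` has marginals `μ₁, μ₂`. Writing `a − ∫ ĉ dπ = ∫ ρ (a − ĉ) dP` and applying the Fenchel–Young
inequality `ρ t ≤ f*_ε(t) + ε f(ρ)` pointwise bounds this by `∫ g dP + ε D_f(π, P)` for any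
majorant `g` of `f*_ε(a − ĉ)`. The first bound takes `g = f*_ε(a − ĉ)` itself; for the second,
monotonicity of `f*`, `ĉ ≥ 0` and `f*(0) ≥ −f(1) = 0` give the majorant
`f*_ε(a) 𝟙{ĉ ≤ a} + ε f*(0)`.
-/

open Set

section fStar

variable {f : ℝ → ℝ}

theorem bddAbove_image_mul_sub (hf_bdd : BddBelow (f '' Ici 0))
    (hf_sl : Tendsto (fun x : ℝ => f x / x) atTop atTop) (y : ℝ) :
    BddAbove ((fun x => x * y - f x) '' Ici 0) := by
  obtain ⟨B, hB⟩ := hf_bdd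
  obtain ⟨M, hM⟩ :=
    ((hf_sl.eventually_ge_atTop y).and (eventually_gt_atTop 0)).exists_forall_of_atTop
  refine ⟨max 0 (M * |y| - B), ?_⟩
  rintro _ ⟨x, hx, rfl⟩
  rcases le_or_gt M x with hMx | hxM
  · obtain ⟨hyx, hx0⟩ := hM x hMx
    have : x * y ≤ f x := by rwa [le_div_iff₀ hx0, mul_comm] at hyx
    exact le_max_of_le_left (by linarith)
  · have hBx : B ≤ f x := hB ⟨x, hx, rfl⟩
    have : x * y ≤ M * |y| :=
      (mul_le_mul_of_nonneg_left (le_abs_self y) hx).trans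
        (mul_le_mul_of_nonneg_right hxM.le (abs_nonneg y))
    exact le_max_of_le_right (by linarith)

theorem mul_sub_le_fStar (hf_bdd : BddBelow (f '' Ici 0))
    (hf_sl : Tendsto (fun x : ℝ => f x / x) atTop atTop) {x : ℝ} (hx : 0 ≤ x) (y : ℝ) :
    x * y - f x ≤ fStar f y :=
  le_csSup (bddAbove_image_mul_sub hf_bdd hf_sl y) ⟨x, hx, rfl⟩

theorem fStar_mono (hf_bdd : BddBelow (f '' Ici 0))
    (hf_sl : Tendsto (fun x : ℝ => f x / x) atTop atTop) : Monotone (fStar f) := by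
  intro y y' hyy'
  refine csSup_le ⟨0 * y - f 0, 0, self_mem_Ici, rfl⟩ ?_
  rintro _ ⟨x, hx, rfl⟩
  calc x * y - f x ≤ x * y' - f x := by gcongr
    _ ≤ fStar f y' := mul_sub_le_fStar hf_bdd hf_sl hx y'

theorem neg_le_fStar (hf_bdd : BddBelow (f '' Ici 0))
    (hf_sl : Tendsto (fun x : ℝ => f x / x) atTop atTop) (y : ℝ) : -f 0 ≤ fStar f y := by
  simpa using mul_sub_le_fStar hf_bdd hf_sl le_rfl y

theorem fStar_zero_nonneg (hf_bdd : BddBelow (f '' Ici 0))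
    (hf_sl : Tendsto (fun x : ℝ => f x / x) atTop atTop) (hf_one : f 1 = 0) :
    0 ≤ fStar f 0 := by
  simpa [hf_one] using mul_sub_le_fStar hf_bdd hf_sl zero_le_one 0

theorem mul_le_mul_fStar_div_add_mul (hf_bdd : BddBelow (f '' Ici 0))
    (hf_sl : Tendsto (fun x : ℝ => f x / x) atTop atTop) {ε x : ℝ} (hε : 0 < ε) (hx : 0 ≤ x)
    (t : ℝ) : x * t ≤ ε * fStar f (t / ε) + ε * f x := by
  have h := mul_le_mul_of_nonneg_left (mul_sub_le_fStar hf_bdd hf_sl hx (t / ε)) hε.le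
  have hxt : ε * (x * (t / ε)) = x * t := by field_simp
  rw [mul_sub, hxt] at h
  linarith

theorem mul_fStar_div_sub_le (hf_bdd : BddBelow (f '' Ici 0))
    (hf_sl : Tendsto (fun x : ℝ => f x / x) atTop atTop) (hf_one : f 1 = 0) {ε a t : ℝ}
    (hε : 0 < ε) (ht : 0 ≤ t) :
    ε * fStar f ((a - t) / ε) ≤ (if t ≤ a then ε * fStar f (a / ε) else 0) + ε * fStar f 0 := by
  have hmono := fStar_mono hf_bdd hf_sl
  have h0 := mul_nonneg hε.le (fStar_zero_nonneg hf_bdd hf_sl hf_one)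
  split_ifs with hta
  · have : ε * fStar f ((a - t) / ε) ≤ ε * fStar f (a / ε) := by
      gcongr; exact hmono (by gcongr; linarith)
    linarith
  · have : ε * fStar f ((a - t) / ε) ≤ ε * fStar f 0 := by
      gcongr; exact hmono (div_nonpos_of_nonpos_of_nonneg (by linarith) hε.le)
    linarith

theorem integral_le_integral_add_mul_integral_of_fStar_le {Z : Type*} [MeasurableSpace Z]
    {π P : Measure Z} [SigmaFinite π] [SigmaFinite P] (hf_bdd : BddBelow (f '' Ici 0))
    (hf_sl : Tendsto (fun x : ℝ => f x / x) atTop atTop) {ε : ℝ} (hε : 0 < ε)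
    (hπP : π ≪ P) (hfρ : Integrable (fun z => f (π.rnDeriv P z).toReal) P)
    {φ g : Z → ℝ} (hφ : Integrable φ π) (hg : Integrable g P)
    (hφg : ∀ z, ε * fStar f (φ z / ε) ≤ g z) :
    ∫ z, φ z ∂π ≤ ∫ z, g z ∂P + ε * ∫ z, f (π.rnDeriv P z).toReal ∂P := by
  rw [← integral_toReal_rnDeriv_mul hπP, ← integral_const_mul,
    ← integral_add hg (hfρ.const_mul ε)]
  refine integral_mono ((integrable_toReal_rnDeriv_mul_iff hπP).2 hφ)
    (hg.add (hfρ.const_mul ε)) fun z => ?_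
  have := mul_le_mul_fStar_div_add_mul hf_bdd hf_sl hε (x := (π.rnDeriv P z).toReal)
    ENNReal.toReal_nonneg (φ z)
  dsimp only
  linarith [hφg z]

end fStar

section couplings2

variable {Y Z : Type*} [MeasurableSpace Y] [MeasurableSpace Z] {μ : Measure Y} {ν : Measure Z}
  {π : Measure (Y × Z)}

theorem MeasureTheory.Integrable.comp_fst_of_mem_couplings2 (hπ : π ∈ couplings2 μ ν)
    {g : Y → ℝ} (hg : Integrable g μ) : Integrable (fun z => g z.1) π :=
  (hπ.2.1 ▸ hg).comp_measurable measurable_fst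

theorem MeasureTheory.Integrable.comp_snd_of_mem_couplings2 (hπ : π ∈ couplings2 μ ν)
    {g : Z → ℝ} (hg : Integrable g ν) : Integrable (fun z => g z.2) π :=
  (hπ.2.2 ▸ hg).comp_measurable measurable_snd

theorem integral_comp_fst_of_mem_couplings2 (hπ : π ∈ couplings2 μ ν) {g : Y → ℝ}
    (hg : AEStronglyMeasurable g μ) : ∫ z, g z.1 ∂π = ∫ y, g y ∂μ := by
  rw [← hπ.2.1, integral_map measurable_fst.aemeasurable (hπ.2.1 ▸ hg)]

theorem integral_comp_snd_of_mem_couplings2 (hπ : π ∈ couplings2 μ ν) {g : Z → ℝ}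
    (hg : AEStronglyMeasurable g ν) : ∫ z, g z.2 ∂π = ∫ y, g y ∂ν := by
  rw [← hπ.2.2, integral_map measurable_snd.aemeasurable (hπ.2.2 ▸ hg)]

theorem integral_eq_integral_sub_add_of_mem_couplings2 (hπ : π ∈ couplings2 μ ν)
    {c : Y × Z → ℝ} (hc : Integrable c π) {h₁ : Y → ℝ} {h₂ : Z → ℝ} (hh₁ : Integrable h₁ μ)
    (hh₂ : Integrable h₂ ν) :
    ∫ z, c z ∂π = ∫ z, (c z - h₁ z.1 - h₂ z.2) ∂π + (∫ y, h₁ y ∂μ + ∫ y, h₂ y ∂ν) := by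
  have hh₁π := hh₁.comp_fst_of_mem_couplings2 hπ
  rw [integral_sub (f := fun z => c z - h₁ z.1) (hc.sub hh₁π)
      (hh₂.comp_snd_of_mem_couplings2 hπ), integral_sub hc hh₁π,
    integral_comp_fst_of_mem_couplings2 hπ hh₁.1, integral_comp_snd_of_mem_couplings2 hπ hh₂.1]
  ring

variable [PseudoMetricSpace Y] [PseudoMetricSpace Z] [OpensMeasurableSpace Y]
  [OpensMeasurableSpace Z]

theorem HasMomentp.integrable_rpow_dist {p : ℝ} (hp : 0 ≤ p) [IsFiniteMeasure μ]
    (hμ : HasMomentp p μ) (y : Y) : Integrable (fun x => dist x y ^ p) μ := by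
  obtain ⟨x₀, hx₀⟩ := hμ
  have hmeas : AEStronglyMeasurable (fun x => dist x y ^ p) μ :=
    ((continuous_id.dist continuous_const).rpow_const fun _ => Or.inr hp).aestronglyMeasurable
  rw [← lintegral_ofReal_ne_top_iff_integrable hmeas (ae_of_all _ fun _ => by positivity)]
  have hbound : ∀ x, ENNReal.ofReal (dist x y ^ p)
      ≤ 2 ^ p * (ENNReal.ofReal (dist x x₀ ^ p) + ENNReal.ofReal (dist x₀ y ^ p)) := by
    intro x
    simp only [← ENNReal.ofReal_rpow_of_nonneg dist_nonneg hp, ← edist_dist]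
    calc edist x y ^ p ≤ (edist x x₀ + edist x₀ y) ^ p := by gcongr; exact edist_triangle _ _ _
      _ ≤ _ := ENNReal.add_rpow_le_two_rpow_mul_rpow_add_rpow _ _ hp
  refine ne_top_of_le_ne_top ?_ (lintegral_mono hbound)
  rw [lintegral_const_mul' _ _ (by simp), lintegral_add_right _ measurable_const, lintegral_const]
  exact ENNReal.mul_ne_top (by simp) (ENNReal.add_ne_top.2
    ⟨hx₀.ne, ENNReal.mul_ne_top ENNReal.ofReal_ne_top (measure_ne_top _ _)⟩)

theorem integrable_of_abs_le_of_mem_couplings2 (hπ : π ∈ couplings2 μ ν) {p : ℝ} (hp : 0 ≤ p)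
    [IsFiniteMeasure μ] [IsFiniteMeasure ν] (hμ : HasMomentp p μ) (hν : HasMomentp p ν)
    {c : Y × Z → ℝ} (hc : AEStronglyMeasurable c π) {C₀ : ℝ} (ŷ : Y × Z)
    (hc_growth : ∀ z : Y × Z, |c z| ≤ C₀ * (1 + (dist z.1 ŷ.1 ^ p + dist z.2 ŷ.2 ^ p))) :
    Integrable c π := by
  have := hπ.1
  have hd := ((hμ.integrable_rpow_dist hp ŷ.1).comp_fst_of_mem_couplings2 hπ).add
    ((hν.integrable_rpow_dist hp ŷ.2).comp_snd_of_mem_couplings2 hπ)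
  exact ((integrable_const 1).add hd).const_mul C₀ |>.mono' hc (ae_of_all _ hc_growth)

end couplings2

theorem coe_sub_integral_le_OTf2 {Y Z : Type*} [MeasurableSpace Y] [MeasurableSpace Z]
    {μ : Measure Y} {ν : Measure Z} [SigmaFinite μ] [SigmaFinite ν]
    {c : Y × Z → ℝ} (hc : ∀ π ∈ couplings2 μ ν, Integrable c π) {h₁ : Y → ℝ} {h₂ : Z → ℝ}
    (hh₁ : Integrable h₁ μ) (hh₂ : Integrable h₂ ν)
    (hpot_opt : ∫ y, h₁ y ∂μ + ∫ y, h₂ y ∂ν = OTcost2 μ ν c) {chat : Y × Z → ℝ}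
    (hchat : ∀ z, chat z = c z - h₁ z.1 - h₂ z.2) {f : ℝ → ℝ}
    (hf_bdd : BddBelow (f '' Ici 0)) (hf_sl : Tendsto (fun x : ℝ => f x / x) atTop atTop)
    {ε : ℝ} (hε : 0 < ε) {a : ℝ} {g : Y × Z → ℝ} (hg : Integrable g (μ.prod ν))
    (hg_le : ∀ z, ε * fStar f ((a - chat z) / ε) ≤ g z) :
    ((OTcost2 μ ν c + a - ∫ z, g z ∂(μ.prod ν) : ℝ) : EReal) ≤ OTf2 μ ν c f ε := by
  refine le_sInf ?_
  rintro _ ⟨π, hπ, rfl⟩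
  dsimp only
  have := hπ.1
  have hcπ := hc π hπ
  have hOT := integral_eq_integral_sub_add_of_mem_couplings2 hπ hcπ hh₁ hh₂
  have hchatπ : Integrable chat π :=
    ((hcπ.sub (hh₁.comp_fst_of_mem_couplings2 hπ)).sub
      (hh₂.comp_snd_of_mem_couplings2 hπ)).congr (ae_of_all _ fun z => (hchat z).symm)
  simp only [← hchat, hpot_opt] at hOT
  by_cases hac :
      π ≪ μ.prod ν ∧ Integrable (fun z => f (π.rnDeriv (μ.prod ν) z).toReal) (μ.prod ν)
  · have hyoung := integral_le_integral_add_mul_integral_of_fStar_le hf_bdd hf_sl hε hac.1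
      hac.2 (φ := fun z => a - chat z) ((integrable_const a).sub hchatπ) hg hg_le
    rw [integral_sub (integrable_const a) hchatπ, integral_const, probReal_univ, one_smul]
      at hyoung
    rw [fDiv, if_pos hac, ← EReal.coe_mul, ← EReal.coe_add, EReal.coe_le_coe_iff]
    linarith
  · rw [fDiv, if_neg hac, EReal.coe_mul_top_of_pos hε, EReal.coe_add_top]
    exact le_top

theorem coe_sub_lintegral_add_le {Z : Type*} [MeasurableSpace Z] {P : Measure Z}
    [IsProbabilityMeasure P] {g : Z → ℝ} {b r : ℝ} {T : EReal} (hg : AEStronglyMeasurable g P)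
    (hgb : ∀ z, 0 ≤ g z + b) (h : Integrable g P → ((r - ∫ z, g z ∂P : ℝ) : EReal) ≤ T) :
    (r : EReal) - (∫⁻ z, ENNReal.ofReal (g z + b) ∂P : ℝ≥0∞) + (b : EReal) ≤ T := by
  set L := ∫⁻ z, ENNReal.ofReal (g z + b) ∂P with hL
  by_cases hL_top : L = ⊤
  · rw [hL_top, EReal.coe_ennreal_top, EReal.sub_top, EReal.bot_add]
    exact bot_le
  have hgb_meas : AEStronglyMeasurable (fun z => g z + b) P := hg.add aestronglyMeasurable_const
  have hgb_int : Integrable (fun z => g z + b) P :=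
    (lintegral_ofReal_ne_top_iff_integrable hgb_meas (ae_of_all _ hgb)).1 hL_top
  have hg_int : Integrable g P :=
    (hgb_int.sub (integrable_const b)).congr (ae_of_all _ fun z => add_sub_cancel_right (g z) b)
  have hL_eq : L.toReal = ∫ z, g z ∂P + b := by
    rw [hL, ← integral_eq_lintegral_of_nonneg_ae (ae_of_all _ hgb) hgb_meas,
      integral_add hg_int (integrable_const b), integral_const, probReal_univ, one_smul]
  rw [← EReal.coe_ennreal_toReal hL_top, hL_eq, ← EReal.coe_sub, ← EReal.coe_add]
  convert h hg_int using 2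
  ring

/-- The integral `∫ f*_ε(a − ĉ) d(μ₁ ⊗ μ₂)`, whose integrand is bounded below by `−ε f 0`, is
encoded as the extended-real quantity `∫⁻ (f*_ε(a − ĉ) + ε f 0) − ε f 0`. -/
theorem dual_lower_bound_general
    {X₁ X₂ : Type*}
    [MetricSpace X₁] [PolishSpace X₁] [MeasurableSpace X₁] [BorelSpace X₁]
    [MetricSpace X₂] [MeasurableSpace X₂] [BorelSpace X₂]
    (p : ℝ) (hp : 1 ≤ p)
    (μ₁ : Measure X₁) (μ₂ : Measure X₂)
    [IsProbabilityMeasure μ₁] [IsProbabilityMeasure μ₂]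
    (hμ₁_mom : HasMomentp p μ₁) (hμ₂_mom : HasMomentp p μ₂)
    (c : X₁ × X₂ → ℝ) (hc_cont : Continuous c)
    (C₀ : ℝ) (xhat : X₁ × X₂)
    (hc_growth : ∀ x : X₁ × X₂,
      |c x| ≤ C₀ * (1 + (dist x.1 xhat.1 ^ p + dist x.2 xhat.2 ^ p)))
    (f : ℝ → ℝ)
    (hf_bdd : BddBelow (f '' Set.Ici (0 : ℝ)))
    (hf_one : f 1 = 0)
    (hf_superlinear : Tendsto (fun x : ℝ => f x / x) atTop atTop)
    (h₁ : X₁ → ℝ) (h₂ : X₂ → ℝ)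
    (hh₁ : Integrable h₁ μ₁) (hh₂ : Integrable h₂ μ₂)
    (hpot : ∀ x : X₁, ∀ y : X₂, h₁ x + h₂ y ≤ c (x, y))
    (hpot_opt : ∫ x, h₁ x ∂μ₁ + ∫ y, h₂ y ∂μ₂ = OTcost2 μ₁ μ₂ c)
    (chat : X₁ × X₂ → ℝ) (hchat : ∀ z : X₁ × X₂, chat z = c z - h₁ z.1 - h₂ z.2)
    (ε : ℝ) (hε : 0 < ε) :
    (∀ a : ℝ,
      ((OTcost2 μ₁ μ₂ c : ℝ) : EReal) + (a : EReal)
        - ((∫⁻ z, ENNReal.ofReal (ε * fStar f ((a - chat z) / ε) + ε * f 0)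
            ∂(μ₁.prod μ₂) : ℝ≥0∞) : EReal)
        + ((ε * f 0 : ℝ) : EReal)
      ≤ OTf2 μ₁ μ₂ c f ε) ∧
    (∀ a : ℝ,
      ((OTcost2 μ₁ μ₂ c + a
        - ε * fStar f (a / ε) * ((μ₁.prod μ₂) {z | chat z ≤ a}).toReal
        - ε * fStar f 0 : ℝ) : EReal)
      ≤ OTf2 μ₁ μ₂ c f ε) := by
  have hc : ∀ π ∈ couplings2 μ₁ μ₂, Integrable c π := fun π hπ =>
    integrable_of_abs_le_of_mem_couplings2 hπ (by linarith) hμ₁_mom hμ₂_mom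
      hc_cont.aestronglyMeasurable xhat hc_growth
  have key {a : ℝ} {g : X₁ × X₂ → ℝ} := coe_sub_integral_le_OTf2 (a := a) (g := g)
    hc hh₁ hh₂ hpot_opt hchat hf_bdd hf_superlinear hε
  have hchat_nonneg : ∀ z, 0 ≤ chat z := fun z => by linarith [hchat z, hpot z.1 z.2]
  have hchat_meas : AEStronglyMeasurable chat (μ₁.prod μ₂) :=
    ((hc_cont.aestronglyMeasurable.sub hh₁.1.comp_fst).sub hh₂.1.comp_snd).congr
      (ae_of_all _ fun z => (hchat z).symm)
  refine ⟨fun a => ?_, fun a => ?_⟩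
  · rw [← EReal.coe_add]
    refine coe_sub_lintegral_add_le ?_ (fun z => ?_) fun hg => key hg fun z => le_rfl
    · exact (((fStar_mono hf_bdd hf_superlinear).measurable.comp_aemeasurable
        ((aemeasurable_const.sub hchat_meas.aemeasurable).div_const ε)).const_mul ε
        ).aestronglyMeasurable
    · nlinarith [neg_le_fStar hf_bdd hf_superlinear ((a - chat z) / ε)]
  · have hs : NullMeasurableSet {z | chat z ≤ a} (μ₁.prod μ₂) :=
      nullMeasurableSet_le hchat_meas.aemeasurable aemeasurable_const
    have hind := (integrable_const (ε * fStar f (a / ε))).indicator₀ hs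
    convert key (g := fun z => {z | chat z ≤ a}.indicator (fun _ => ε * fStar f (a / ε)) z
        + ε * fStar f 0) (hind.add (integrable_const _)) fun z => by
      simpa [indicator_apply] using
        mul_fStar_div_sub_le hf_bdd hf_superlinear hf_one (a := a) hε (hchat_nonneg z) using 2
    rw [integral_add hind (integrable_const _), integral_indicator₀ hs, setIntegral_const,
      integral_const, probReal_univ, measureReal_def, smul_eq_mul, smul_eq_mul]
    ring

/-- Lemma 4.1 (dual lower bound): if `ĥ₁, ĥ₂` are Kantorovich potentials for `OT` and
`ĉ = c − ĥ₁ ⊕ ĥ₂`, then for every `a ∈ ℝ`,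
`OT_{f,ε} − OT ≥ a − ∫ f*_ε(a − ĉ) d(μ₁ ⊗ μ₂)` and
`OT_{f,ε} − OT ≥ a − f*_ε(a) (μ₁ ⊗ μ₂)(ĉ ≤ a) − ε f*(0)`.
(The integral `∫ f*_ε(a − ĉ) d(μ₁ ⊗ μ₂)`, whose integrand is bounded below by `−ε f 0`, is
expressed as the extended-real quantity `∫⁻ (f*_ε(a − ĉ) + ε f 0) − ε f 0`.) -/
theorem dual_lower_bound
    {X₁ X₂ : Type*}
    [MetricSpace X₁] [PolishSpace X₁] [MeasurableSpace X₁] [BorelSpace X₁]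
    [MetricSpace X₂] [PolishSpace X₂] [MeasurableSpace X₂] [BorelSpace X₂]
    (p : ℝ) (hp : 1 ≤ p)
    (μ₁ : Measure X₁) (μ₂ : Measure X₂)
    [IsProbabilityMeasure μ₁] [IsProbabilityMeasure μ₂]
    (hμ₁_mom : HasMomentp p μ₁) (hμ₂_mom : HasMomentp p μ₂)
    (c : X₁ × X₂ → ℝ) (hc_cont : Continuous c)
    (C₀ : ℝ) (hC₀ : 0 ≤ C₀) (xhat : X₁ × X₂)
    (hc_growth : ∀ x : X₁ × X₂,
      |c x| ≤ C₀ * (1 + (dist x.1 xhat.1 ^ p + dist x.2 xhat.2 ^ p)))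
    (f : ℝ → ℝ)
    (hf_convex : StrictConvexOn ℝ (Set.Ici (0 : ℝ)) f)
    (hf_bdd : BddBelow (f '' Set.Ici (0 : ℝ)))
    (hf_one : f 1 = 0)
    (hf_superlinear : Tendsto (fun x : ℝ => f x / x) atTop atTop)
    (h₁ : X₁ → ℝ) (h₂ : X₂ → ℝ)
    (hh₁ : Integrable h₁ μ₁) (hh₂ : Integrable h₂ μ₂)
    (hpot : ∀ x : X₁, ∀ y : X₂, h₁ x + h₂ y ≤ c (x, y))
    (hpot_opt : ∫ x, h₁ x ∂μ₁ + ∫ y, h₂ y ∂μ₂ = OTcost2 μ₁ μ₂ c)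
    (chat : X₁ × X₂ → ℝ) (hchat : ∀ z : X₁ × X₂, chat z = c z - h₁ z.1 - h₂ z.2)
    (ε : ℝ) (hε : 0 < ε) :
    (∀ a : ℝ,
      ((OTcost2 μ₁ μ₂ c : ℝ) : EReal) + (a : EReal)
        - ((∫⁻ z, ENNReal.ofReal (ε * fStar f ((a - chat z) / ε) + ε * f 0)
            ∂(μ₁.prod μ₂) : ℝ≥0∞) : EReal)
        + ((ε * f 0 : ℝ) : EReal)
      ≤ OTf2 μ₁ μ₂ c f ε) ∧
    (∀ a : ℝ,
      ((OTcost2 μ₁ μ₂ c + a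
        - ε * fStar f (a / ε) * ((μ₁.prod μ₂) {z | chat z ≤ a}).toReal
        - ε * fStar f 0 : ℝ) : EReal)
      ≤ OTf2 μ₁ μ₂ c f ε) :=
  dual_lower_bound_general p hp μ₁ μ₂ hμ₁_mom hμ₂_mom c hc_cont C₀ xhat hc_growth f hf_bdd hf_one
    hf_superlinear h₁ h₂ hh₁ hh₂ hpot hpot_opt chat hchat ε hε
end
end

section
/- Let μ₁ = μ₂ be the uniform distribution on [0,1]^d ⊂ ℝ^d, let c(x,y) = Σ_{i=1}^d |x_i − y_i|, and let f(x) = (x^ρ − 1)/ρ for some ρ > 1. Then there exist constants K > 0 and K' ≥ 0 such that for all ε ∈ (0,1]: OT_{f,ε} − OT ≥ K·ε^{1/((ρ−1)d+1)} − K'·ε. -/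
/-!
Write `P` for the product coupling and put `δ = ε ^ (1 / ((ρ - 1) d + 1))`. A coupling `π` either
pays transport cost at least `δ / 2`, or, by Markov's inequality, puts mass at least `1 / 2` on the
strip `{c < δ}` around the diagonal, whose `P`-measure is at most `(2δ) ^ d`. In the second case
Jensen's inequality on the strip gives `D_f(π, P) ≥ ((1/2) ^ ρ (2δ) ^ (-(ρ - 1) d) - 1) / ρ`, and
`δ` is chosen so that `ε δ ^ (-(ρ - 1) d) = δ`. So in both cases the regularised cost of `π` is at
least `K δ - ε / ρ`, while `OT = 0` by the diagonal coupling.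
-/

open MeasureTheory ENNReal Filter

noncomputable section

theorem OTcost2_le_integral {Y Z : Type*} [MeasurableSpace Y] [MeasurableSpace Z]
    {μ : Measure Y} {ν : Measure Z} {c : Y × Z → ℝ} (hc : 0 ≤ c) {π : Measure (Y × Z)}
    (hπ : π ∈ couplings2 μ ν) : OTcost2 μ ν c ≤ ∫ z, c z ∂π :=
  csInf_le ⟨0, by rintro _ ⟨κ, -, rfl⟩; exact integral_nonneg hc⟩ ⟨π, hπ, rfl⟩

theorem map_diag_mem_couplings2 {Y : Type*} [MeasurableSpace Y] (μ : Measure Y)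
    [IsProbabilityMeasure μ] : μ.map (fun x => (x, x)) ∈ couplings2 μ μ := by
  have hdiag : Measurable fun x : Y => (x, x) := measurable_id.prodMk measurable_id
  refine ⟨Measure.isProbabilityMeasure_map hdiag.aemeasurable, ?_, ?_⟩ <;>
  · rw [Measure.map_map (by fun_prop) hdiag]
    exact Measure.map_id

theorem OTcost2_self_nonpos {Y : Type*} [MeasurableSpace Y] (μ : Measure Y)
    [IsProbabilityMeasure μ] {c : Y × Y → ℝ} (hc : 0 ≤ c) (hcm : Measurable c)
    (hdiag : ∀ x, c (x, x) = 0) : OTcost2 μ μ c ≤ 0 := by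
  have hdm : Measurable fun x : Y => (x, x) := measurable_id.prodMk measurable_id
  calc OTcost2 μ μ c ≤ ∫ z, c z ∂(μ.map fun x => (x, x)) :=
        OTcost2_le_integral hc (map_diag_mem_couplings2 μ)
    _ = 0 := by
      rw [integral_map hdm.aemeasurable hcm.aestronglyMeasurable]
      simp [hdiag]

theorem fDiv_of_absolutelyContinuous_of_integrable {Z : Type*} [MeasurableSpace Z] {f : ℝ → ℝ}
    {μ ν : Measure Z} (hμν : μ ≪ ν) (hint : Integrable (fun z => f (μ.rnDeriv ν z).toReal) ν) :
    fDiv f μ ν = ((∫ z, f (μ.rnDeriv ν z).toReal ∂ν : ℝ) : EReal) :=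
  if_pos ⟨hμν, hint⟩

theorem fDiv_of_not {Z : Type*} [MeasurableSpace Z] {f : ℝ → ℝ} {μ ν : Measure Z}
    (h : ¬(μ ≪ ν ∧ Integrable (fun z => f (μ.rnDeriv ν z).toReal) ν)) : fDiv f μ ν = ⊤ :=
  if_neg h

theorem le_OTf2_of_forall_le {Y Z : Type*} [MeasurableSpace Y] [MeasurableSpace Z]
    {μ : Measure Y} {ν : Measure Z} {c : Y × Z → ℝ} {f : ℝ → ℝ} {ε B : ℝ} (hε : 0 < ε)
    (h : ∀ π ∈ couplings2 μ ν, π ≪ μ.prod ν →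
      Integrable (fun z => f (π.rnDeriv (μ.prod ν) z).toReal) (μ.prod ν) →
      B ≤ ∫ z, c z ∂π + ε * ∫ z, f (π.rnDeriv (μ.prod ν) z).toReal ∂(μ.prod ν)) :
    (B : EReal) ≤ OTf2 μ ν c f ε := by
  refine le_sInf ?_
  rintro _ ⟨π, hπ, rfl⟩
  dsimp only
  by_cases hfin : π ≪ μ.prod ν ∧
      Integrable (fun z => f (π.rnDeriv (μ.prod ν) z).toReal) (μ.prod ν)
  · rw [fDiv_of_absolutelyContinuous_of_integrable hfin.1 hfin.2, ← EReal.coe_mul,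
      ← EReal.coe_add, EReal.coe_le_coe_iff]
    exact h π hπ hfin.1 hfin.2
  · rw [fDiv_of_not hfin, EReal.coe_mul_top_of_pos hε,
      EReal.add_top_of_ne_bot (EReal.coe_ne_bot _)]
    exact le_top

theorem measureReal_mul_le_setIntegral_rnDeriv {α : Type*} [MeasurableSpace α]
    {π P : Measure α} [IsFiniteMeasure π] [IsFiniteMeasure P] (hπP : π ≪ P) {g : ℝ → ℝ}
    (hg : ConvexOn ℝ (Set.Ici 0) g) (hgc : ContinuousOn g (Set.Ici 0))
    (hint : Integrable (fun z => g (π.rnDeriv P z).toReal) P) {A : Set α} (hA : P A ≠ 0) :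
    P.real A * g (π.real A / P.real A) ≤ ∫ z in A, g (π.rnDeriv P z).toReal ∂P := by
  have hjensen := hg.map_set_average_le hgc isClosed_Ici hA (measure_ne_top _ _)
    (ae_of_all _ fun _ => ENNReal.toReal_nonneg) Measure.integrable_toReal_rnDeriv.integrableOn
    hint.integrableOn
  rw [setAverage_eq, setAverage_eq, Measure.setIntegral_toReal_rnDeriv hπP, smul_eq_mul,
    smul_eq_mul, inv_mul_eq_div] at hjensen
  have ha : 0 < P.real A := ENNReal.toReal_pos hA (measure_ne_top _ _)
  calc P.real A * g (π.real A / P.real A)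
      ≤ P.real A * ((P.real A)⁻¹ * ∫ z in A, g (π.rnDeriv P z).toReal ∂P) := by gcongr
    _ = ∫ z in A, g (π.rnDeriv P z).toReal ∂P := by field_simp

theorem rpow_mul_rpow_sub_one_div_le_integral_rnDeriv {α : Type*} [MeasurableSpace α]
    {π P : Measure α} [IsFiniteMeasure π] [IsProbabilityMeasure P] (hπP : π ≪ P) {ρ : ℝ}
    (hρ : 1 < ρ) (hint : Integrable (fun z => ((π.rnDeriv P z).toReal ^ ρ - 1) / ρ) P)
    {A : Set α} (hA : MeasurableSet A) (hA0 : P A ≠ 0) :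
    (π.real A ^ ρ * P.real A ^ (1 - ρ) - 1) / ρ ≤
      ∫ z, ((π.rnDeriv P z).toReal ^ ρ - 1) / ρ ∂P := by
  set g : ℝ → ℝ := fun x => (x ^ ρ - 1) / ρ
  have hρ0 : 0 < ρ := by linarith
  have hg : ConvexOn ℝ (Set.Ici 0) g := by
    have hg_eq : g = (fun x => ρ⁻¹ • x ^ ρ) + fun _ => -ρ⁻¹ := by
      funext x
      simp only [g, Pi.add_apply, smul_eq_mul]
      ring
    rw [hg_eq]
    exact ((convexOn_rpow hρ.le).smul (inv_nonneg.2 hρ0.le)).add_const _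
  have hgc : ContinuousOn g (Set.Ici 0) :=
    (((Real.continuous_rpow_const hρ0.le).sub continuous_const).div_const ρ).continuousOn
  have hg_ge : ∀ x : ℝ, 0 ≤ x → -1 / ρ ≤ g x := fun x hx => by
    have := Real.rpow_nonneg hx ρ
    simp only [g]; gcongr; linarith
  set a := P.real A
  set b := π.real A
  have ha : 0 < a := ENNReal.toReal_pos hA0 (measure_ne_top _ _)
  have hjensen_A : (b ^ ρ * a ^ (1 - ρ) - a) / ρ ≤ ∫ z in A, g (π.rnDeriv P z).toReal ∂P := by
    refine le_of_eq_of_le ?_ (measureReal_mul_le_setIntegral_rnDeriv hπP hg hgc hint hA0)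
    change _ = a * (((b / a) ^ ρ - 1) / ρ)
    rw [Real.div_rpow measureReal_nonneg ha.le, Real.rpow_sub ha, Real.rpow_one]
    field_simp
    rfl
  have hbound_Ac : P.real Aᶜ * (-1 / ρ) ≤ ∫ z in Aᶜ, g (π.rnDeriv P z).toReal ∂P := by
    rw [← smul_eq_mul, ← setIntegral_const]
    exact setIntegral_mono_on integrableOn_const hint.integrableOn hA.compl
      fun z _ => hg_ge _ ENNReal.toReal_nonneg
  rw [probReal_compl_eq_one_sub hA] at hbound_Ac
  rw [← integral_add_compl hA hint]
  calc (b ^ ρ * a ^ (1 - ρ) - 1) / ρ = (b ^ ρ * a ^ (1 - ρ) - a) / ρ + (1 - a) * (-1 / ρ) := by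
        ring
    _ ≤ _ := add_le_add hjensen_A hbound_Ac

theorem integral_rpow_sub_one_div_rnDeriv_nonneg {α : Type*} [MeasurableSpace α]
    {π P : Measure α} [IsProbabilityMeasure π] [IsProbabilityMeasure P] (hπP : π ≪ P) {ρ : ℝ}
    (hρ : 1 < ρ) (hint : Integrable (fun z => ((π.rnDeriv P z).toReal ^ ρ - 1) / ρ) P) :
    0 ≤ ∫ z, ((π.rnDeriv P z).toReal ^ ρ - 1) / ρ ∂P := by
  simpa using rpow_mul_rpow_sub_one_div_le_integral_rnDeriv hπP hρ hint MeasurableSet.univ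
    (by simp)

theorem half_le_measureReal_lt_of_integral_lt {α : Type*} [MeasurableSpace α] {π : Measure α}
    [IsProbabilityMeasure π] {c : α → ℝ} (hc : 0 ≤ c) (hint : Integrable c π) {δ : ℝ}
    (hδ : 0 < δ) (hI : ∫ z, c z ∂π < δ / 2) : 1 / 2 ≤ π.real {z | c z < δ} := by
  have hmarkov := mul_meas_ge_le_integral_of_nonneg (ae_of_all _ hc) hint δ
  have hcover : π.real Set.univ ≤ π.real {z | c z < δ} + π.real {z | δ ≤ c z} :=
    (measureReal_mono fun z _ => lt_or_ge (c z) δ).trans (measureReal_union_le _ _)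
  rw [probReal_univ] at hcover
  nlinarith

theorem half_rpow_mul_le_rpow_mul_rpow {d : ℕ} {a b δ ρ : ℝ} (hρ : 1 ≤ ρ) (hδ : 0 ≤ δ)
    (hb : 1 / 2 ≤ b) (ha : 0 < a) (haδ : a ≤ (2 * δ) ^ d) :
    (1 / 2) ^ ρ * (2 * δ) ^ ((d : ℝ) * (1 - ρ)) ≤ b ^ ρ * a ^ (1 - ρ) := by
  have hδa : (2 * δ) ^ ((d : ℝ) * (1 - ρ)) ≤ a ^ (1 - ρ) := by
    rw [Real.rpow_mul (by positivity), Real.rpow_natCast]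
    exact Real.rpow_le_rpow_of_nonpos ha haδ (by linarith)
  gcongr

theorem mul_rpow_one_div_add_one_rpow_neg {ε : ℝ} (hε : 0 < ε) {m : ℝ} (hm : m + 1 ≠ 0) :
    ε * (ε ^ (1 / (m + 1))) ^ (-m) = ε ^ (1 / (m + 1)) := by
  calc ε * (ε ^ (1 / (m + 1))) ^ (-m) = ε ^ (1 : ℝ) * ε ^ (1 / (m + 1) * -m) := by
        rw [Real.rpow_one, ← Real.rpow_mul hε.le]
    _ = ε ^ (1 + 1 / (m + 1) * -m) := (Real.rpow_add hε _ _).symm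
    _ = ε ^ (1 / (m + 1)) := by
        congr 1
        field_simp
        ring

def uniformCube (d : ℕ) : Measure (Fin d → ℝ) :=
  Measure.pi fun _ => volume.restrict (Set.Icc (0 : ℝ) 1)

def l1Cost (d : ℕ) (z : (Fin d → ℝ) × (Fin d → ℝ)) : ℝ :=
  ∑ i, |z.1 i - z.2 i|

instance (d : ℕ) : IsProbabilityMeasure (uniformCube d) :=
  have : IsProbabilityMeasure (volume.restrict (Set.Icc (0 : ℝ) 1)) :=
    ⟨by simp [Real.volume_Icc]⟩
  Measure.pi.instIsProbabilityMeasure _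

theorem l1Cost_nonneg (d : ℕ) : 0 ≤ l1Cost d :=
  fun _ => Finset.sum_nonneg fun _ _ => abs_nonneg _

theorem l1Cost_self (d : ℕ) (x : Fin d → ℝ) : l1Cost d (x, x) = 0 := by
  simp [l1Cost]

theorem continuous_l1Cost (d : ℕ) : Continuous (l1Cost d) := by
  unfold l1Cost
  fun_prop

theorem abs_sub_le_l1Cost {d : ℕ} (z : (Fin d → ℝ) × (Fin d → ℝ)) (i : Fin d) :
    |z.1 i - z.2 i| ≤ l1Cost d z :=
  Finset.single_le_sum (f := fun i => |z.1 i - z.2 i|) (fun _ _ => abs_nonneg _)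
    (Finset.mem_univ i)

theorem l1Cost_le_of_mem_Icc {d : ℕ} {z : (Fin d → ℝ) × (Fin d → ℝ)}
    (h₁ : ∀ i, z.1 i ∈ Set.Icc (0 : ℝ) 1) (h₂ : ∀ i, z.2 i ∈ Set.Icc (0 : ℝ) 1) :
    l1Cost d z ≤ d := by
  calc l1Cost d z ≤ ∑ _i : Fin d, (1 : ℝ) :=
        Finset.sum_le_sum fun i _ => abs_sub_le_iff.2
          ⟨by linarith [(h₁ i).2, (h₂ i).1], by linarith [(h₁ i).1, (h₂ i).2]⟩
    _ = d := by simp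

theorem ae_mem_Icc_uniformCube (d : ℕ) : ∀ᵐ x ∂uniformCube d, ∀ i, x i ∈ Set.Icc (0 : ℝ) 1 := by
  have := ae_restrict_mem (μ := Measure.pi fun _ : Fin d => volume)
    (MeasurableSet.univ_pi fun _ : Fin d => measurableSet_Icc (a := (0 : ℝ)) (b := 1))
  rw [Measure.restrict_pi_pi] at this
  filter_upwards [this] with x hx i using hx i (Set.mem_univ i)

theorem integrable_l1Cost {d : ℕ} {π : Measure ((Fin d → ℝ) × (Fin d → ℝ))}
    (hπ : π ∈ couplings2 (uniformCube d) (uniformCube d)) : Integrable (l1Cost d) π := by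
  obtain ⟨hprob, hfst, hsnd⟩ := hπ
  have h₁ := ae_of_ae_map measurable_fst.aemeasurable (hfst ▸ ae_mem_Icc_uniformCube d)
  have h₂ := ae_of_ae_map measurable_snd.aemeasurable (hsnd ▸ ae_mem_Icc_uniformCube d)
  refine Integrable.mono' (integrable_const (d : ℝ)) (continuous_l1Cost d).aestronglyMeasurable ?_
  filter_upwards [h₁, h₂] with z hz₁ hz₂
  rw [Real.norm_of_nonneg (l1Cost_nonneg d z)]
  exact l1Cost_le_of_mem_Icc hz₁ hz₂

theorem uniformCube_pi_Icc_le {d : ℕ} (x : Fin d → ℝ) {δ : ℝ} (hδ : 0 ≤ δ) :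
    uniformCube d (Set.univ.pi fun i => Set.Icc (x i - δ) (x i + δ)) ≤
      ENNReal.ofReal ((2 * δ) ^ d) := by
  rw [uniformCube, Measure.pi_pi, ENNReal.ofReal_pow (by positivity)]
  refine (Finset.prod_le_prod' fun i _ => ?_).trans_eq (Fin.prod_const d _)
  calc _ ≤ volume (Set.Icc (x i - δ) (x i + δ)) := Measure.restrict_apply_le _ _
    _ = ENNReal.ofReal (2 * δ) := by rw [Real.volume_Icc]; ring_nf

theorem measureReal_l1Cost_lt_le (d : ℕ) {δ : ℝ} (hδ : 0 ≤ δ) :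
    ((uniformCube d).prod (uniformCube d)).real {z | l1Cost d z < δ} ≤ (2 * δ) ^ d := by
  refine ENNReal.toReal_le_of_le_ofReal (by positivity) ?_
  have hslice (x : Fin d → ℝ) : Prod.mk x ⁻¹' {z | l1Cost d z < δ} ⊆
      Set.univ.pi fun i => Set.Icc (x i - δ) (x i + δ) := fun y hy i _ => by
    have := (abs_sub_le_l1Cost (x, y) i).trans hy.le
    constructor <;> linarith [abs_le.1 this]
  rw [Measure.prod_apply (measurableSet_lt (continuous_l1Cost d).measurable measurable_const)]
  calc ∫⁻ x, uniformCube d (Prod.mk x ⁻¹' {z | l1Cost d z < δ}) ∂uniformCube d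
      ≤ ∫⁻ _, ENNReal.ofReal ((2 * δ) ^ d) ∂uniformCube d :=
        lintegral_mono fun x => (measure_mono (hslice x)).trans (uniformCube_pi_Icc_le x hδ)
    _ = ENNReal.ofReal ((2 * δ) ^ d) := by simp

theorem le_integral_l1Cost_or_le_integral_rnDeriv {d : ℕ} {ρ δ : ℝ} (hρ : 1 < ρ) (hδ : 0 < δ)
    {π : Measure ((Fin d → ℝ) × (Fin d → ℝ))}
    (hπ : π ∈ couplings2 (uniformCube d) (uniformCube d))
    (hac : π ≪ (uniformCube d).prod (uniformCube d))
    (hint : Integrable (fun z => ((π.rnDeriv ((uniformCube d).prod (uniformCube d)) z).toReal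
      ^ ρ - 1) / ρ) ((uniformCube d).prod (uniformCube d))) :
    δ / 2 ≤ ∫ z, l1Cost d z ∂π ∨
      ((1 / 2) ^ ρ * (2 * δ) ^ ((d : ℝ) * (1 - ρ)) - 1) / ρ ≤
        ∫ z, ((π.rnDeriv ((uniformCube d).prod (uniformCube d)) z).toReal ^ ρ - 1) / ρ
          ∂(uniformCube d).prod (uniformCube d) := by
  have : IsProbabilityMeasure π := hπ.1
  rw [or_iff_not_imp_left, not_le]
  intro hI
  set A := {z | l1Cost d z < δ}
  have hA : MeasurableSet A := measurableSet_lt (continuous_l1Cost d).measurable measurable_const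
  have hb : 1 / 2 ≤ π.real A :=
    half_le_measureReal_lt_of_integral_lt (l1Cost_nonneg d) (integrable_l1Cost hπ) hδ hI
  have hA0 : (uniformCube d).prod (uniformCube d) A ≠ 0 := fun h => by
    have : π.real A = 0 := by simp [measureReal_def, hac h]
    linarith
  have ha : 0 < ((uniformCube d).prod (uniformCube d)).real A :=
    ENNReal.toReal_pos hA0 (measure_ne_top _ _)
  calc ((1 / 2) ^ ρ * (2 * δ) ^ ((d : ℝ) * (1 - ρ)) - 1) / ρ
      ≤ (π.real A ^ ρ * ((uniformCube d).prod (uniformCube d)).real A ^ (1 - ρ) - 1) / ρ := by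
        gcongr (?_ - 1) / ρ
        exact half_rpow_mul_le_rpow_mul_rpow hρ.le hδ.le hb ha
            (measureReal_l1Cost_lt_le d hδ.le)
    _ ≤ _ := rpow_mul_rpow_sub_one_div_le_integral_rnDeriv hac hρ hint hA hA0

theorem le_integral_l1Cost_add_mul_integral_rnDeriv {d : ℕ} {ρ ε : ℝ} (hρ : 1 < ρ) (hε : 0 < ε)
    {π : Measure ((Fin d → ℝ) × (Fin d → ℝ))}
    (hπ : π ∈ couplings2 (uniformCube d) (uniformCube d))
    (hac : π ≪ (uniformCube d).prod (uniformCube d))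
    (hint : Integrable (fun z => ((π.rnDeriv ((uniformCube d).prod (uniformCube d)) z).toReal
      ^ ρ - 1) / ρ) ((uniformCube d).prod (uniformCube d))) :
    min (1 / 2) ((1 / 2) ^ ρ * 2 ^ ((d : ℝ) * (1 - ρ)) / ρ) * ε ^ (1 / ((ρ - 1) * d + 1))
        - 1 / ρ * ε ≤
      ∫ z, l1Cost d z ∂π + ε * ∫ z, ((π.rnDeriv ((uniformCube d).prod (uniformCube d)) z).toReal
        ^ ρ - 1) / ρ ∂(uniformCube d).prod (uniformCube d) := by
  have : IsProbabilityMeasure π := hπ.1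
  set C := (1 / 2) ^ ρ * 2 ^ ((d : ℝ) * (1 - ρ)) / ρ
  set δ := ε ^ (1 / ((ρ - 1) * d + 1))
  have hδ : 0 < δ := by positivity
  have hI := integral_nonneg (μ := π) (l1Cost_nonneg d)
  have hr := integral_rpow_sub_one_div_rnDeriv_nonneg hac hρ hint
  have hρε : 0 ≤ 1 / ρ * ε := mul_nonneg (one_div_nonneg.2 (by linarith)) hε.le
  rcases le_integral_l1Cost_or_le_integral_rnDeriv hρ hδ hπ hac hint with hI' | hr'
  · have := mul_le_mul_of_nonneg_right (min_le_left (1 / 2) C) hδ.le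
    have := mul_nonneg hε.le hr
    linarith
  · have hεδ : ε * δ ^ ((d : ℝ) * (1 - ρ)) = δ := by
      convert mul_rpow_one_div_add_one_rpow_neg hε (m := (ρ - 1) * d) (by
        nlinarith [mul_nonneg (sub_nonneg.2 hρ.le) (Nat.cast_nonneg (α := ℝ) d)]) using 3
      ring
    have hεr : ε * (((1 / 2) ^ ρ * (2 * δ) ^ ((d : ℝ) * (1 - ρ)) - 1) / ρ) = C * δ - 1 / ρ * ε :=
      calc _ = (1 / 2) ^ ρ * 2 ^ ((d : ℝ) * (1 - ρ)) * (ε * δ ^ ((d : ℝ) * (1 - ρ))) / ρ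
            - 1 / ρ * ε := by rw [Real.mul_rpow zero_le_two hδ.le]; ring
        _ = C * δ - 1 / ρ * ε := by rw [hεδ]; ring
    have := mul_le_mul_of_nonneg_right (min_le_right (1 / 2) C) hδ.le
    have := mul_le_mul_of_nonneg_left hr' hε.le
    linarith

theorem sharpness_lipschitz_Lrho_general
    (d : ℕ) (ρ : ℝ) (hρ : 1 < ρ)
    (μ : Measure (Fin d → ℝ))
    (hμ : μ = Measure.pi (fun _ : Fin d => volume.restrict (Set.Icc (0 : ℝ) 1)))
    (c : (Fin d → ℝ) × (Fin d → ℝ) → ℝ)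
    (hc : ∀ z : (Fin d → ℝ) × (Fin d → ℝ), c z = ∑ i, |z.1 i - z.2 i|) :
    ∃ K : ℝ, 0 < K ∧ ∃ K' : ℝ, 0 ≤ K' ∧ ∀ ε : ℝ, ε ∈ Set.Ioc (0 : ℝ) 1 →
      ((OTcost2 μ μ c + K * ε ^ (1 / ((ρ - 1) * d + 1)) - K' * ε : ℝ) : EReal) ≤
        OTf2 μ μ c (fun x => (x ^ ρ - 1) / ρ) ε := by
  obtain rfl : μ = uniformCube d := hμ
  obtain rfl : c = l1Cost d := funext hc
  have hρ0 : 0 < ρ := by linarith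
  have hK : 0 < min (1 / 2) ((1 / 2) ^ ρ * 2 ^ ((d : ℝ) * (1 - ρ)) / ρ) :=
    lt_min (by norm_num) (div_pos (by positivity) hρ0)
  refine ⟨_, hK, 1 / ρ, by positivity, fun ε ⟨hε, _⟩ => ?_⟩
  have hOT := OTcost2_self_nonpos (uniformCube d) (l1Cost_nonneg d)
    (continuous_l1Cost d).measurable (l1Cost_self d)
  refine le_trans ?_ (le_OTf2_of_forall_le hε fun π hπ hac hint =>
    le_integral_l1Cost_add_mul_integral_rnDeriv hρ hε hπ hac hint)
  exact EReal.coe_le_coe_iff.2 (by linarith)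

/-- Proposition 4.2 (ii) (sharpness, `L^ρ` case): for `μ₁ = μ₂` uniform on `[0,1]^d`,
`c(x,y) = ∑ᵢ |xᵢ − yᵢ|` and `f x = (x^ρ − 1)/ρ` with `ρ > 1`, there are `K > 0`, `K' ≥ 0`
such that for all `ε ∈ (0,1]`: `OT_{f,ε} − OT ≥ K ε^{1/((ρ−1)d+1)} − K' ε`. -/
theorem sharpness_lipschitz_Lrho
    (d : ℕ) (hd : 0 < d) (ρ : ℝ) (hρ : 1 < ρ)
    (μ : Measure (Fin d → ℝ))
    (hμ : μ = Measure.pi (fun _ : Fin d => volume.restrict (Set.Icc (0 : ℝ) 1)))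
    (c : (Fin d → ℝ) × (Fin d → ℝ) → ℝ)
    (hc : ∀ z : (Fin d → ℝ) × (Fin d → ℝ), c z = ∑ i, |z.1 i - z.2 i|) :
    ∃ K : ℝ, 0 < K ∧ ∃ K' : ℝ, 0 ≤ K' ∧ ∀ ε : ℝ, ε ∈ Set.Ioc (0 : ℝ) 1 →
      ((OTcost2 μ μ c + K * ε ^ (1 / ((ρ - 1) * d + 1)) - K' * ε : ℝ) : EReal) ≤
        OTf2 μ μ c (fun x => (x ^ ρ - 1) / ρ) ε :=
  sharpness_lipschitz_Lrho_general d ρ hρ μ hμ c hc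

end
end
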